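/- Let h be a 4-dimensional Lie subalgebra of T*su(2) that is degenerate with respect to the canonical bilinear form ⟨u+α, v+β⟩ = α(v) + β(u). Then there exists a Lie algebra automorphism F of su(2) such that T*F(h) = ℝe_1 ⊕ su(2)*, where T*F is the automorphism of T*su(2) given by T*F(u+α) = F(u) + α∘F^{−1}. -/

import Mathlib

section TStarExtension

variable {L : Type*} [LieRing L] [LieAlgebra ℝ L]

/-- The Lie ring structure of the `T*`-extension `T*g = g ⊕ g*` of a real Lie algebra `g`:
`[u + α, v + β] = [u,v] + ad*_u β − ad*_v α`, where `(ad*_u α)(v) = −α([u,v])`.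
(Here `⁅u, β⁆ = ad*_u β` is the coadjoint action of Mathlib's
`Module.Dual.instLieRingModule`, for which `⁅u, β⁆ v = −β ⁅u, v⁆`.) -/
instance tstarLieRing : LieRing (L × Module.Dual ℝ L) where
  bracket x y := (⁅x.1, y.1⁆, ⁅x.1, y.2⁆ - ⁅y.1, x.2⁆)
  add_lie x y z := by
    refine Prod.ext ?_ ?_
    · show ⁅(x + y).1, z.1⁆ = (⁅x.1, z.1⁆ + ⁅y.1, z.1⁆ : L)
      simp [add_lie]
    · show ⁅(x + y).1, z.2⁆ - ⁅z.1, (x + y).2⁆ =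
        (⁅x.1, z.2⁆ - ⁅z.1, x.2⁆) + (⁅y.1, z.2⁆ - ⁅z.1, y.2⁆)
      simp only [Prod.fst_add, Prod.snd_add, add_lie, lie_add]
      abel
  lie_add x y z := by
    refine Prod.ext ?_ ?_
    · show ⁅x.1, (y + z).1⁆ = (⁅x.1, y.1⁆ + ⁅x.1, z.1⁆ : L)
      simp [lie_add]
    · show ⁅x.1, (y + z).2⁆ - ⁅(y + z).1, x.2⁆ =
        (⁅x.1, y.2⁆ - ⁅y.1, x.2⁆) + (⁅x.1, z.2⁆ - ⁅z.1, x.2⁆)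
      simp only [Prod.fst_add, Prod.snd_add, add_lie, lie_add]
      abel
  lie_self x := by
    refine Prod.ext ?_ ?_
    · show ⁅x.1, x.1⁆ = (0 : L)
      simp
    · show ⁅x.1, x.2⁆ - ⁅x.1, x.2⁆ = (0 : Module.Dual ℝ L)
      simp
  leibniz_lie x y z := by
    refine Prod.ext ?_ ?_
    · show ⁅x.1, ⁅y.1, z.1⁆⁆ = (⁅⁅x.1, y.1⁆, z.1⁆ + ⁅y.1, ⁅x.1, z.1⁆⁆ : L)
      exact leibniz_lie _ _ _
    · show ⁅x.1, ⁅y.1, z.2⁆ - ⁅z.1, y.2⁆⁆ - ⁅⁅y.1, z.1⁆, x.2⁆ =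
        (⁅⁅x.1, y.1⁆, z.2⁆ - ⁅z.1, ⁅x.1, y.2⁆ - ⁅y.1, x.2⁆⁆) +
        (⁅y.1, ⁅x.1, z.2⁆ - ⁅z.1, x.2⁆⁆ - ⁅⁅x.1, z.1⁆, y.2⁆)
      simp only [lie_lie, lie_sub]
      abel

/-- The `T*`-extension is a Lie algebra over `ℝ`. -/
noncomputable instance tstarLieAlgebra : LieAlgebra ℝ (L × Module.Dual ℝ L) where
  lie_smul t x y := by
    refine Prod.ext ?_ ?_
    · show ⁅x.1, (t • y).1⁆ = t • ⁅x.1, y.1⁆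
      rw [Prod.smul_fst, lie_smul]
    · show ⁅x.1, (t • y).2⁆ - ⁅(t • y).1, x.2⁆ = t • (⁅x.1, y.2⁆ - ⁅y.1, x.2⁆)
      ext m
      simp only [Prod.smul_fst, Prod.smul_snd, LinearMap.sub_apply, LinearMap.smul_apply,
        Module.Dual.lie_apply, smul_lie, map_smul, smul_eq_mul, smul_sub]
      ring

/-- The canonical invariant bilinear form of the `T*`-extension:
`⟨u + α, v + β⟩ = α(v) + β(u)`. -/
def tstarForm (x y : L × Module.Dual ℝ L) : ℝ := x.2 y.1 + y.2 x.1

end TStarExtension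

/-- For a Lie algebra automorphism `F` of `g`, the induced automorphism
`T*F = (F, (F⁻¹)*)` of the `T*`-extension: `T*F(u + α) = (F u, α ∘ F⁻¹)`. -/
def tstarAut {L : Type*} [LieRing L] [LieAlgebra ℝ L] (F : L ≃ₗ⁅ℝ⁆ L) :
    (L × Module.Dual ℝ L) →ₗ[ℝ] (L × Module.Dual ℝ L) :=
  LinearMap.prodMap F.toLinearEquiv.toLinearMap
    F.symm.toLinearEquiv.toLinearMap.dualMap

/-!
Write `P ⊆ su(2)` for the projection of `H` and `K = H ∩ su(2)*`, so that
`dim P + dim K = dim H = 4`. In coordinates `su(2)` is `(ℝ³, ×)`; it has no 2-dimensional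
subalgebra, since the cross product of a basis of a plane is orthogonal to the plane. `K` is stable
under the coadjoint action of `P`, and `su(2)` is perfect, so `su(2)*` has no invariant line; hence
`P` cannot be all of `su(2)`. This forces `dim P = 1` and `K = su(2)*`, i.e. `H = ℝv ⊕ su(2)*`.
Finally a half-turn of `ℝ³` preserves the cross product and moves `v` onto the axis `ℝe₁`.
-/

open Matrix Module

namespace Submodule

lemma exists_eq_span_singleton_of_finrank_eq_one {K V : Type*} [DivisionRing K]
    [AddCommGroup V] [Module K V] {p : Submodule K V} (h : finrank K p = 1) :
    ∃ v ≠ 0, p = K ∙ v := by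
  obtain ⟨v, hv0, hv⟩ := finrank_eq_one_iff'.mp h
  refine ⟨v, by simpa using hv0,
    le_antisymm (fun w hw ↦ ?_) ((span_singleton_le_iff_mem _ _).mpr v.2)⟩
  obtain ⟨c, hc⟩ := hv ⟨w, hw⟩
  exact mem_span_singleton.mpr ⟨c, congr_arg Subtype.val hc⟩

lemma finrank_map_fst_add_finrank_comap_inr {K M N : Type*} [DivisionRing K] [AddCommGroup M]
    [Module K M] [AddCommGroup N] [Module K N] [FiniteDimensional K M] [FiniteDimensional K N]
    (H : Submodule K (M × N)) :
    finrank K (H.map (LinearMap.fst K M N)) + finrank K (H.comap (LinearMap.inr K M N)) =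
      finrank K H := by
  have hker : finrank K (LinearMap.ker ((LinearMap.fst K M N).domRestrict H)) =
      finrank K (H.comap (LinearMap.inr K M N)) :=
    calc _ = finrank K ↥(H ⊓ LinearMap.range (LinearMap.inr K M N)) := by
          rw [← finrank_map_subtype_eq, LinearMap.ker_domRestrict, map_comap_subtype,
            LinearMap.ker_fst]
      _ = finrank K ((H.comap (LinearMap.inr K M N)).map (LinearMap.inr K M N)) := by
          rw [map_comap_eq, inf_comm]
      _ = _ := (equivMapOfInjective _ LinearMap.inr_injective _).finrank_eq.symm
  rw [← hker, ← LinearMap.range_domRestrict, LinearMap.finrank_range_add_finrank_ker]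

lemma eq_map_fst_prod_top_of_comap_inr_eq_top {R M N : Type*} [Ring R] [AddCommGroup M]
    [Module R M] [AddCommGroup N] [Module R N] {H : Submodule R (M × N)}
    (h : H.comap (LinearMap.inr R M N) = ⊤) : H = (H.map (LinearMap.fst R M N)).prod ⊤ := by
  refine le_antisymm (fun z hz ↦ ⟨⟨z, hz, rfl⟩, trivial⟩) ?_
  rintro ⟨_, α⟩ ⟨⟨z, hz, rfl⟩, -⟩
  have hα : ((0 : M), α - z.2) ∈ H := show α - z.2 ∈ H.comap (LinearMap.inr R M N) from h ▸ trivial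
  convert H.add_mem hz hα using 1
  ext <;> simp

end Submodule

lemma lie_lie_eq_zero_of_forall_lie_eq_smul {R L M : Type*} [CommRing R] [LieRing L]
    [LieAlgebra R L] [AddCommGroup M] [Module R M] [LieRingModule L M] [LieModule R L M] {m : M}
    (hm : ∀ u : L, ∃ t : R, ⁅u, m⁆ = t • m) (u v : L) : ⁅⁅u, v⁆, m⁆ = 0 := by
  obtain ⟨s, hs⟩ := hm u
  obtain ⟨t, ht⟩ := hm v
  rw [lie_lie, ht, lie_smul, hs, lie_smul, ht, smul_smul, smul_smul, mul_comm, sub_self]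

section TStar

variable {L : Type*} [LieRing L] [LieAlgebra ℝ L]

lemma tstar_lie_inr (z : L × Module.Dual ℝ L) (α : Module.Dual ℝ L) :
    ⁅z, ((0 : L), α)⁆ = ((0 : L), ⁅z.1, α⁆) :=
  Prod.ext (lie_zero z.1) (sub_eq_self.mpr (zero_lie z.2))

def tstarFst : (L × Module.Dual ℝ L) →ₗ⁅ℝ⁆ L :=
  { LinearMap.fst ℝ L (Module.Dual ℝ L) with map_lie' := rfl }

lemma tstar_lie_mem_comap_inr (H : LieSubalgebra ℝ (L × Module.Dual ℝ L)) {u : L}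
    (hu : u ∈ H.toSubmodule.map (LinearMap.fst ℝ L (Module.Dual ℝ L)))
    {α : Module.Dual ℝ L} (hα : α ∈ H.toSubmodule.comap (LinearMap.inr ℝ L (Module.Dual ℝ L))) :
    ⁅u, α⁆ ∈ H.toSubmodule.comap (LinearMap.inr ℝ L (Module.Dual ℝ L)) := by
  obtain ⟨z, hz, rfl⟩ := hu
  have : ⁅z, ((0 : L), α)⁆ ∈ H := H.lie_mem hz hα
  rwa [tstar_lie_inr] at this

lemma map_tstarAut_prod_top (F : L ≃ₗ⁅ℝ⁆ L) (p : Submodule ℝ L) :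
    (p.prod ⊤).map (tstarAut F) = (p.map F.toLinearEquiv.toLinearMap).prod ⊤ := by
  rw [tstarAut, LinearMap.prodMap_map_prod, Submodule.map_top]
  congr 1
  exact LinearMap.range_eq_top.mpr F.symm.toLinearEquiv.dualMap.surjective

end TStar

section HalfTurn

variable {K : Type*} [Field K]

def halfTurn (w : Fin 3 → K) : (Fin 3 → K) →ₗ[K] Fin 3 → K where
  toFun f := (2 * (f ⬝ᵥ w) / (w ⬝ᵥ w)) • w - f
  map_add' f g := by simp only [add_dotProduct, mul_add, add_div, add_smul]; abel
  map_smul' c f := by simp only [smul_dotProduct, smul_eq_mul, RingHom.id_apply]; module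

lemma halfTurn_apply (w f : Fin 3 → K) :
    halfTurn w f = (2 * (f ⬝ᵥ w) / (w ⬝ᵥ w)) • w - f := rfl

variable {w : Fin 3 → K}

lemma halfTurn_involutive (hw : w ⬝ᵥ w ≠ 0) : Function.Involutive (halfTurn w) := by
  intro f
  simp only [halfTurn_apply, sub_dotProduct, smul_dotProduct, smul_eq_mul]
  field_simp
  module

lemma halfTurn_cross (hw : w ⬝ᵥ w ≠ 0) (f g : Fin 3 → K) :
    halfTurn w (f ⨯₃ g) = halfTurn w f ⨯₃ halfTurn w g := by
  have hw' : w 0 ^ 2 + w 1 ^ 2 + w 2 ^ 2 ≠ 0 := by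
    simpa only [dotProduct, Fin.sum_univ_three, sq] using hw
  ext i
  fin_cases i <;>
  · simp only [halfTurn_apply, cross_apply, dotProduct, Fin.sum_univ_three, Pi.sub_apply,
      Pi.smul_apply, smul_eq_mul, Fin.zero_eta, Fin.mk_one, Fin.reduceFinMk, cons_val_zero,
      cons_val_one, cons_val_two, head_cons, tail_cons]
    field_simp
    ring

end HalfTurn

lemma exists_halfTurn_apply_eq_smul_single (f : Fin 3 → ℝ) :
    ∃ w : Fin 3 → ℝ, w ⬝ᵥ w ≠ 0 ∧ ∃ t : ℝ, halfTurn w f = t • Pi.single 0 1 := by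
  -- the half-turn about the bisector `f + n • Pi.single 0 1` swaps `f` and `n • Pi.single 0 1`;
  -- if the bisector vanishes, `f` already lies on the axis
  set n := √(f ⬝ᵥ f)
  have hn : n * n = f ⬝ᵥ f := Real.mul_self_sqrt (Finset.sum_nonneg fun i _ ↦ mul_self_nonneg (f i))
  by_cases hw : (f + n • Pi.single 0 1) ⬝ᵥ (f + n • Pi.single 0 1) = 0
  · have hf : f = (-n) • Pi.single 0 1 := by
      rw [neg_smul, eq_neg_iff_add_eq_zero]
      exact dotProduct_self_eq_zero.mp hw
    refine ⟨Pi.single 0 1, by simp, -n, ?_⟩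
    rw [hf, halfTurn_apply]
    simp only [neg_smul, dotProduct_single, Pi.neg_apply, Pi.smul_apply, Pi.single_eq_same,
      smul_eq_mul, mul_one, mul_neg, div_one, sub_neg_eq_add]
    module
  · refine ⟨_, hw, n, ?_⟩
    have hdot : (f + n • Pi.single 0 1) ⬝ᵥ (f + n • Pi.single 0 1) =
        2 * (f ⬝ᵥ (f + n • Pi.single 0 1)) := by
      simp only [add_dotProduct, dotProduct_add, smul_dotProduct, dotProduct_smul, smul_eq_mul,
        dotProduct_comm _ f, ← hn]
      simp only [dotProduct_single, mul_one, Pi.single_eq_same]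
      ring
    rw [halfTurn_apply, ← hdot, div_self hw, one_smul, add_sub_cancel_left]

lemma finrank_ne_two_of_cross_mem {K : Type*} [Field K] [LinearOrder K] [IsStrictOrderedRing K]
    (Q : Submodule K (Fin 3 → K)) (hQ : ∀ u ∈ Q, ∀ v ∈ Q, u ⨯₃ v ∈ Q) : finrank K Q ≠ 2 := by
  intro h2
  let e : Basis (Fin 2) K Q := finBasisOfFinrankEq K Q h2
  set u : Fin 3 → K := ↑(e 0)
  set v : Fin 3 → K := ↑(e 1)
  have hne : u ⨯₃ v ≠ 0 := by
    have huv : ![u, v] = Q.subtype ∘ e := by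
      ext i : 1
      fin_cases i <;> rfl
    refine crossProduct_ne_zero_iff_linearIndependent.mpr ?_
    rw [huv]
    exact e.linearIndependent.map' Q.subtype Q.ker_subtype
  obtain ⟨r, s, hrs⟩ : ∃ r s : K, u ⨯₃ v = r • u + s • v := by
    have := congr_arg Subtype.val (e.sum_repr ⟨u ⨯₃ v, hQ u (e 0).2 v (e 1).2⟩)
    rw [Fin.sum_univ_two] at this
    exact ⟨_, _, this.symm⟩
  apply hne
  rw [← dotProduct_self_eq_zero]
  nth_rw 2 [hrs]
  rw [dotProduct_add, dotProduct_smul, dotProduct_smul, dotProduct_comm _ u,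
    dotProduct_comm _ v, dot_self_cross, dot_cross_self, smul_zero, smul_zero, add_zero]

section SU2

variable {L : Type*} [LieRing L] [LieAlgebra ℝ L] (b : Basis (Fin 3) ℝ L)
  (h12 : ⁅b 0, b 1⁆ = b 2) (h23 : ⁅b 1, b 2⁆ = b 0) (h31 : ⁅b 2, b 0⁆ = b 1)
include h12 h23 h31

lemma su2_equivFun_lie (x y : L) : b.equivFun ⁅x, y⁆ = b.equivFun x ⨯₃ b.equivFun y := by
  have h21 : ⁅b 1, b 0⁆ = -b 2 := by rw [← lie_skew, h12]
  have h32 : ⁅b 2, b 1⁆ = -b 0 := by rw [← lie_skew, h23]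
  have h13 : ⁅b 0, b 2⁆ = -b 1 := by rw [← lie_skew, h31]
  let bracket : L →ₗ[ℝ] L →ₗ[ℝ] Fin 3 → ℝ :=
    (LieModule.toEnd ℝ L L : L →ₗ[ℝ] Module.End ℝ L).compr₂ b.equivFun.toLinearMap
  let cross : L →ₗ[ℝ] L →ₗ[ℝ] Fin 3 → ℝ :=
    crossProduct.compl₁₂ b.equivFun.toLinearMap b.equivFun.toLinearMap
  suffices bracket = cross from LinearMap.congr_fun₂ this x y
  refine b.ext fun i ↦ b.ext fun j ↦ ?_
  simp only [bracket, cross, LinearMap.compr₂_apply, LinearMap.compl₁₂_apply,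
    LinearEquiv.coe_coe]
  fin_cases i <;> fin_cases j <;> ext k <;> fin_cases k <;>
    simp [h12, h23, h31, h21, h32, h13, cross_apply]

noncomputable def su2HalfTurn (w : Fin 3 → ℝ) (hw : w ⬝ᵥ w ≠ 0) : L ≃ₗ⁅ℝ⁆ L :=
  { (b.equivFun.trans (LinearEquiv.ofInvolutive (halfTurn w) (halfTurn_involutive hw))).trans
      b.equivFun.symm with
    map_lie' := fun {x y} ↦ b.equivFun.injective <| by
      simp only [LinearMap.toFun_eq_coe, LinearEquiv.coe_coe, LinearEquiv.trans_apply,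
        LinearEquiv.apply_symm_apply, LinearEquiv.coe_ofInvolutive,
        su2_equivFun_lie b h12 h23 h31]
      exact halfTurn_cross hw _ _ }

lemma equivFun_su2HalfTurn (w : Fin 3 → ℝ) (hw : w ⬝ᵥ w ≠ 0) (x : L) :
    b.equivFun (su2HalfTurn b h12 h23 h31 w hw x) = halfTurn w (b.equivFun x) :=
  b.equivFun.apply_symm_apply _

lemma su2_exists_lieEquiv_apply_eq_smul (v : L) : ∃ (F : L ≃ₗ⁅ℝ⁆ L) (t : ℝ), F v = t • b 0 := by
  obtain ⟨w, hw, t, ht⟩ := exists_halfTurn_apply_eq_smul_single (b.equivFun v)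
  refine ⟨su2HalfTurn b h12 h23 h31 w hw, t, b.equivFun.injective ?_⟩
  rw [equivFun_su2HalfTurn, ht, map_smul, Basis.equivFun_apply, Basis.repr_self,
    Finsupp.single_eq_pi_single]

lemma su2_finrank_lieSubalgebra_ne_two (P : LieSubalgebra ℝ L) : finrank ℝ P ≠ 2 := by
  change finrank ℝ P.toSubmodule ≠ 2
  rw [← b.equivFun.finrank_map_eq P.toSubmodule]
  refine finrank_ne_two_of_cross_mem _ ?_
  rintro _ ⟨x, hx, rfl⟩ _ ⟨y, hy, rfl⟩
  exact ⟨⁅x, y⁆, P.lie_mem hx hy, su2_equivFun_lie b h12 h23 h31 x y⟩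

lemma su2_dual_eq_zero_of_forall_lie_eq_smul {α : Module.Dual ℝ L}
    (hα : ∀ u : L, ∃ t : ℝ, ⁅u, α⁆ = t • α) : α = 0 := by
  have hperfect : ∀ k, ∃ i j, ⁅b i, b j⁆ = b k := by
    intro k
    fin_cases k
    exacts [⟨1, 2, h23⟩, ⟨2, 0, h31⟩, ⟨0, 1, h12⟩]
  have hinv : ∀ i, ⁅b i, α⁆ = 0 := fun k ↦ by
    obtain ⟨i, j, hij⟩ := hperfect k
    rw [← hij]
    exact lie_lie_eq_zero_of_forall_lie_eq_smul hα _ _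
  refine b.ext fun k ↦ ?_
  obtain ⟨i, j, hij⟩ := hperfect k
  rw [← hij, LinearMap.zero_apply, ← neg_eq_zero, ← Module.Dual.lie_apply, hinv,
    LinearMap.zero_apply]

lemma su2_dual_finrank_lieSubmodule_ne_one (K : LieSubmodule ℝ L (Module.Dual ℝ L)) :
    finrank ℝ K ≠ 1 := by
  intro hK
  obtain ⟨α, hα0, hKα⟩ :=
    (K : Submodule ℝ (Module.Dual ℝ L)).exists_eq_span_singleton_of_finrank_eq_one hK
  refine hα0 (su2_dual_eq_zero_of_forall_lie_eq_smul b h12 h23 h31 fun u ↦ ?_)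
  have : ⁅u, α⁆ ∈ (K : Submodule ℝ (Module.Dual ℝ L)) :=
    K.lie_mem (hKα ▸ Submodule.mem_span_singleton_self α)
  obtain ⟨t, ht⟩ := Submodule.mem_span_singleton.mp (hKα ▸ this)
  exact ⟨t, ht.symm⟩

lemma su2_tstar_eq_span_prod_top_of_finrank_eq_four (H : LieSubalgebra ℝ (L × Module.Dual ℝ L))
    (hdim : finrank ℝ H = 4) : ∃ v ≠ 0, H.toSubmodule = (ℝ ∙ v).prod ⊤ := by
  have : FiniteDimensional ℝ L := Module.Finite.of_basis b
  have hL : finrank ℝ L = 3 := by simpa using finrank_eq_card_basis b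
  have hL' : finrank ℝ (Module.Dual ℝ L) = 3 := by rw [Subspace.dual_finrank_eq, hL]
  set P := H.toSubmodule.map (LinearMap.fst ℝ L (Module.Dual ℝ L))
  set K := H.toSubmodule.comap (LinearMap.inr ℝ L (Module.Dual ℝ L))
  have hsum : finrank ℝ P + finrank ℝ K = 4 :=
    H.toSubmodule.finrank_map_fst_add_finrank_comap_inr.trans hdim
  have hK : finrank ℝ K ≤ 3 := hL' ▸ K.finrank_le
  have hP2 : finrank ℝ P ≠ 2 := su2_finrank_lieSubalgebra_ne_two b h12 h23 h31 (H.map tstarFst)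
  have hP3 : finrank ℝ P ≠ 3 := by
    intro hP3
    have hPtop : P = ⊤ := Submodule.eq_top_of_finrank_eq (hP3.trans hL.symm)
    let K' : LieSubmodule ℝ L (Module.Dual ℝ L) :=
      { K with lie_mem := fun hα ↦ tstar_lie_mem_comap_inr H (Submodule.eq_top_iff'.mp hPtop _) hα }
    exact su2_dual_finrank_lieSubmodule_ne_one b h12 h23 h31 K' (by change finrank ℝ K = 1; omega)
  have hP : finrank ℝ P = 1 := by have := hL ▸ P.finrank_le; omega
  have hKtop : K = ⊤ := Submodule.eq_top_of_finrank_eq (by omega)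
  obtain ⟨v, hv0, hPv⟩ := Submodule.exists_eq_span_singleton_of_finrank_eq_one hP
  exact ⟨v, hv0, hPv ▸ Submodule.eq_map_fst_prod_top_of_comap_inr_eq_top hKtop⟩

end SU2

theorem tstar_su2_four_dim_degenerate_subalgebra_general
    {L : Type*} [LieRing L] [LieAlgebra ℝ L]
    (b : Module.Basis (Fin 3) ℝ L)
    (h12 : ⁅b 0, b 1⁆ = b 2) (h23 : ⁅b 1, b 2⁆ = b 0) (h31 : ⁅b 2, b 0⁆ = b 1)
    (H : LieSubalgebra ℝ (L × Module.Dual ℝ L))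
    (hdim : Module.finrank ℝ H = 4) :
    ∃ F : L ≃ₗ⁅ℝ⁆ L,
      Submodule.map (tstarAut F) H.toSubmodule =
        (Submodule.span ℝ {b 0}).prod (⊤ : Submodule ℝ (Module.Dual ℝ L)) := by
  obtain ⟨v, hv0, hH⟩ := su2_tstar_eq_span_prod_top_of_finrank_eq_four b h12 h23 h31 H hdim
  obtain ⟨F, t, hFv⟩ := su2_exists_lieEquiv_apply_eq_smul b h12 h23 h31 v
  have ht : t ≠ 0 := by
    rintro rfl
    exact hv0 (by simpa using hFv)
  refine ⟨F, ?_⟩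
  rw [hH, map_tstarAut_prod_top, Submodule.map_span, Set.image_singleton, LinearEquiv.coe_coe,
    LieEquiv.coe_toLinearEquiv, hFv, Submodule.span_singleton_smul_eq (IsUnit.mk0 t ht)]

/-- Every 4-dimensional Lie subalgebra of `T*su(2)` that is degenerate with respect to the
canonical bilinear form can be mapped, by `T*F` for some automorphism `F` of `su(2)`, onto
`ℝe₁ ⊕ su(2)*`. -/
theorem tstar_su2_four_dim_degenerate_subalgebra
    {L : Type*} [LieRing L] [LieAlgebra ℝ L]
    (b : Module.Basis (Fin 3) ℝ L)
    (h12 : ⁅b 0, b 1⁆ = b 2) (h23 : ⁅b 1, b 2⁆ = b 0) (h31 : ⁅b 2, b 0⁆ = b 1)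
    (H : LieSubalgebra ℝ (L × Module.Dual ℝ L))
    (hdim : Module.finrank ℝ H = 4)
    (hdeg : ∃ x ∈ H, x ≠ 0 ∧ ∀ y ∈ H, tstarForm x y = 0) :
    ∃ F : L ≃ₗ⁅ℝ⁆ L,
      Submodule.map (tstarAut F) H.toSubmodule =
        (Submodule.span ℝ {b 0}).prod (⊤ : Submodule ℝ (Module.Dual ℝ L)) :=
  tstar_su2_four_dim_degenerate_subalgebra_general b h12 h23 h31 H hdim
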